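/- If a word over {open, close} is a Dyck word, and we delete one opening bracket and one closing bracket from it such that the result is NOT a Dyck word, then there is a position strictly between the two deleted symbols' positions at which the original word's depth equals the depth contributed only by symbols left of the first deletion — equivalently, the depth between the two deleted positions attains 0 in the modified counting; contrapositively, if the depth of the original word is at least 1 at every position between the deleted opening and closing bracket, the result is a Dyck word. -/

import Mathlib

/-!
Deleting the opening bracket at `n1` lowers the depth by one at the positions between `n1` and
`n2`, and deleting the closing bracket at `n2` restores it from there on. So the shortened word
can only dip below zero where the original depth is zero strictly between `n1` and `n2`; at `n2`
itself the depth is positive, since a closing bracket follows.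
-/

/-- Weight of a bracket symbol: open (`true`) counts +1, close (`false`) counts -1. -/
def wt (b : Bool) : ℤ := if b then 1 else -1

/-- Depth after reading the first `k` symbols of `w`. -/
def depth (w : List Bool) (k : ℕ) : ℤ := ((w.take k).map wt).sum

/-- A Dyck word: every prefix sum is nonnegative and the total sum is zero. -/
def IsDyck (w : List Bool) : Prop :=
  (∀ k, 0 ≤ depth w k) ∧ depth w w.length = 0

lemma wt_true : wt true = 1 := rfl

lemma wt_false : wt false = -1 := rfl

lemma depth_succ {w : List Bool} {k : ℕ} (hk : k < w.length) :
    depth w (k + 1) = depth w k + wt w[k] := by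
  rw [depth, depth, List.map_take, List.map_take, List.sum_take_succ _ _ (by simpa using hk),
    List.getElem_map]

lemma depth_of_length_le {w : List Bool} {k : ℕ} (hk : w.length ≤ k) :
    depth w k = depth w w.length := by
  simp only [depth, List.take_of_length_le hk, List.take_length]

lemma depth_eraseIdx_of_le (w : List Bool) {i k : ℕ} (hk : k ≤ i) :
    depth (w.eraseIdx i) k = depth w k := by
  rw [depth, List.take_eraseIdx_eq_take_of_le w k i hk, depth]

lemma depth_eraseIdx_of_lt {w : List Bool} {i k : ℕ} (hi : i < w.length) (hk : i < k) :
    depth (w.eraseIdx i) k = depth w (k + 1) - wt w[i] := by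
  have hsplit : w.take (k + 1) = w.take i ++ w[i] :: (w.drop (i + 1)).take (k - i) := by
    rw [show k + 1 = i + (k - i + 1) by omega, List.take_add, List.drop_eq_getElem_cons hi,
      List.take_succ_cons]
  rw [depth, depth, hsplit, List.eraseIdx_eq_take_drop_succ, List.take_append,
    List.take_take, min_eq_right hk.le, List.length_take_of_le hi.le]
  simp only [List.map_append, List.sum_append, List.map_cons, List.sum_cons]
  ring

lemma depth_eraseIdx_eraseIdx {S : List Bool} {n1 n2 : ℕ} (h12 : n1 < n2) (h2 : n2 < S.length)
    (ho : S[n1] = true) (hc : S[n2] = false) (k : ℕ) :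
    depth ((S.eraseIdx n2).eraseIdx n1) k =
      if k ≤ n1 then depth S k else if k < n2 then depth S (k + 1) - 1 else depth S (k + 2) := by
  have hn1 : n1 < (S.eraseIdx n2).length := by rw [List.length_eraseIdx_of_lt h2]; omega
  split_ifs with hk1 hk2
  · rw [depth_eraseIdx_of_le _ hk1, depth_eraseIdx_of_le _ (by omega)]
  · rw [depth_eraseIdx_of_lt hn1 (by omega), List.getElem_eraseIdx_of_lt hn1 h12, ho,
      depth_eraseIdx_of_le _ (by omega), wt_true]
  · rw [depth_eraseIdx_of_lt hn1 (by omega), List.getElem_eraseIdx_of_lt hn1 h12, ho,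
      depth_eraseIdx_of_lt h2 (by omega), hc, wt_true, wt_false]
    ring

theorem IsDyck.eraseIdx_eraseIdx {S : List Bool} (hS : IsDyck S) {n1 n2 : ℕ} (h12 : n1 < n2)
    (h2 : n2 < S.length) (ho : S[n1] = true) (hc : S[n2] = false)
    (hpos : ∀ k, n1 < k → k < n2 → 0 < depth S k) :
    IsDyck ((S.eraseIdx n2).eraseIdx n1) := by
  have hn2 : 0 < depth S n2 := by
    have := hS.1 (n2 + 1)
    rw [depth_succ h2, hc, wt_false] at this
    omega
  refine ⟨fun k => ?_, ?_⟩
  · rw [depth_eraseIdx_eraseIdx h12 h2 ho hc]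
    split_ifs with hk1 hk2
    · exact hS.1 k
    · rcases (show k + 1 < n2 ∨ k + 1 = n2 by omega) with hk | rfl
      · linarith [hpos (k + 1) (by omega) hk]
      · linarith
    · exact hS.1 (k + 2)
  · have hlen : ((S.eraseIdx n2).eraseIdx n1).length ≤ S.length :=
      (List.length_eraseIdx_le _ _).trans (List.length_eraseIdx_le _ _)
    rw [← depth_of_length_le hlen, depth_eraseIdx_eraseIdx h12 h2 ho hc, if_neg (by omega),
      if_neg (by omega), depth_of_length_le (by omega)]
    exact hS.2

/-- If deleting an opening bracket at position n1 and a closing bracket at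
position n2 > n1 from a Dyck word does not yield a Dyck word, then the depth of
the original word vanishes at some position strictly between n1 and n2. -/
theorem exists_zero_depth_of_not_dyck_after_expulsion (S : List Bool)
    (hS : IsDyck S) (n1 n2 : ℕ) (h12 : n1 < n2) (h2 : n2 < S.length)
    (h1 : n1 < S.length) (ho : S[n1]'h1 = true) (hc : S[n2]'h2 = false)
    (hnot : ¬ IsDyck ((S.eraseIdx n2).eraseIdx n1)) :
    ∃ k, n1 < k ∧ k < n2 ∧ depth S k = 0 := by
  by_contra! hne
  exact hnot <| hS.eraseIdx_eraseIdx h12 h2 ho hc fun k hk1 hk2 =>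
    (hS.1 k).lt_of_ne (hne k hk1 hk2).symm
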